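/- arXiv:2505.21869 — 2 statements merged into one kernel-verified Lean document; each statement's English description precedes it below -/
import Mathlib

section
/- Let f(x,y) = arcsinh(e^y · cos x) for (x,y) ∈ ℝ². Then f satisfies the zero-mean-curvature equation (1 − f_y²)·f_xx + 2·f_x·f_y·f_xy + (1 − f_x²)·f_yy = 0 at every point of ℝ². -/
noncomputable def scherkF : ℝ → ℝ → ℝ := fun x y => Real.arsinh (Real.exp y * Real.cos x)

noncomputable def scherkFx : ℝ → ℝ → ℝ := fun x y => deriv (fun x' => scherkF x' y) x
noncomputable def scherkFy : ℝ → ℝ → ℝ := fun x y => deriv (fun y' => scherkF x y') y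
noncomputable def scherkFxx : ℝ → ℝ → ℝ := fun x y => deriv (fun x' => scherkFx x' y) x
noncomputable def scherkFxy : ℝ → ℝ → ℝ := fun x y => deriv (fun y' => scherkFx x y') y
noncomputable def scherkFyy : ℝ → ℝ → ℝ := fun x y => deriv (fun y' => scherkFy x y') y

/-! With `u = eʸ cos x`, `v = eʸ sin x` and `S = √(1 + u²)` one has `u_x = -v`, `u_y = u`,
`v_x = u`, `v_y = v`, hence `f_x = -v / S`, `f_y = u / S`, and every second derivative of `f`
is a polynomial in `u, v` over `S³`. Clearing denominators, the equation becomes a polynomial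
identity modulo the relation `S² = 1 + u²`. -/

open Real

theorem HasDerivAt.div_sqrt_one_add_sq {N D : ℝ → ℝ} {n' d' t : ℝ}
    (hN : HasDerivAt N n' t) (hD : HasDerivAt D d' t) :
    HasDerivAt (fun s => N s / √(1 + D s ^ 2))
      ((n' * (1 + D t ^ 2) - N t * D t * d') / √(1 + D t ^ 2) ^ 3) t := by
  have hpos : 0 < 1 + D t ^ 2 := by positivity
  have hS := ((hD.fun_pow 2).const_add 1).sqrt hpos.ne'
  refine (hN.div hS (sqrt_pos.2 hpos).ne').congr_deriv ?_
  field_simp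
  rw [sq_sqrt hpos.le]
  ring

theorem scherkFx_eq : scherkFx = fun x y => -(exp y * sin x) / √(1 + (exp y * cos x) ^ 2) := by
  ext x y
  simp only [scherkFx, scherkF]
  rw [((hasDerivAt_cos x).const_mul (exp y)).arsinh.deriv, smul_eq_mul]
  ring

theorem scherkFy_eq : scherkFy = fun x y => exp y * cos x / √(1 + (exp y * cos x) ^ 2) := by
  ext x y
  simp only [scherkFy, scherkF]
  rw [((hasDerivAt_exp y).mul_const (cos x)).arsinh.deriv, smul_eq_mul]
  ring

theorem scherkFxx_eq (x y : ℝ) : scherkFxx x y =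
    -(exp y * cos x) * (1 + (exp y * cos x) ^ 2 + (exp y * sin x) ^ 2)
      / √(1 + (exp y * cos x) ^ 2) ^ 3 := by
  simp only [scherkFxx, scherkFx_eq]
  rw [(((hasDerivAt_sin x).const_mul (exp y)).fun_neg.div_sqrt_one_add_sq
    ((hasDerivAt_cos x).const_mul (exp y))).deriv]
  ring

theorem scherkFxy_eq (x y : ℝ) :
    scherkFxy x y = -(exp y * sin x) / √(1 + (exp y * cos x) ^ 2) ^ 3 := by
  simp only [scherkFxy, scherkFx_eq]
  rw [(((hasDerivAt_exp y).mul_const (sin x)).fun_neg.div_sqrt_one_add_sq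
    ((hasDerivAt_exp y).mul_const (cos x))).deriv]
  ring

theorem scherkFyy_eq (x y : ℝ) :
    scherkFyy x y = exp y * cos x / √(1 + (exp y * cos x) ^ 2) ^ 3 := by
  have hcos := (hasDerivAt_exp y).mul_const (cos x)
  simp only [scherkFyy, scherkFy_eq]
  rw [(hcos.div_sqrt_one_add_sq hcos).deriv]
  ring

theorem zmc_identity {u v S : ℝ} (hS : S ≠ 0) (hS2 : S ^ 2 = 1 + u ^ 2) :
    (1 - (u / S) ^ 2) * (-u * (1 + u ^ 2 + v ^ 2) / S ^ 3)
      + 2 * (-v / S) * (u / S) * (-v / S ^ 3) + (1 - (-v / S) ^ 2) * (u / S ^ 3) = 0 := by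
  field_simp
  linear_combination (u - u * (1 + u ^ 2 + v ^ 2)) * hS2

theorem scherk_zmc (x y : ℝ) :
    (1 - scherkFy x y ^ 2) * scherkFxx x y
      + 2 * scherkFx x y * scherkFy x y * scherkFxy x y
      + (1 - scherkFx x y ^ 2) * scherkFyy x y = 0 := by
  have hpos : 0 < 1 + (exp y * cos x) ^ 2 := by positivity
  rw [scherkFxx_eq, scherkFxy_eq, scherkFyy_eq, scherkFx_eq, scherkFy_eq]
  exact zmc_identity (sqrt_pos.2 hpos).ne' (sq_sqrt hpos.le)
end

section
/- Define Log on the set {z = u + jv : u² ≠ v²} by Log(z) = log√|u² − v²| + j·log√(|u+v|/|u−v|). Then for every split-complex z, Log(exp z) = z, where exp(u+jv) = e^u(cosh v + j sinh v). Moreover, if N²(z) > 0 and Re(z) > 0, then exp(Log z) = z. -/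
/-
In the light-cone coordinates `u + v`, `u - v` split-complex multiplication is componentwise,
so `exp` becomes `(e^(u+v), e^(u-v))` and `Log` becomes `(log (u+v), log (u-v))`, each followed
by the change of coordinates back. Both identities thus reduce to `log ∘ exp = id` on ℝ and
`exp ∘ log = id` on `(0, ∞)`; the hypotheses `u² - v² > 0` and `u > 0` say exactly that both
light-cone coordinates are positive.
-/

/-- Exponential of a split-complex number `u + jv`. -/
noncomputable def splitExp : ℝ × ℝ → ℝ × ℝ := fun z =>
  (Real.exp z.1 * Real.cosh z.2, Real.exp z.1 * Real.sinh z.2)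

/-- Logarithm of a split-complex number `u + jv` with `u² ≠ v²`. -/
noncomputable def splitLog : ℝ × ℝ → ℝ × ℝ := fun z =>
  (Real.log (Real.sqrt |z.1 ^ 2 - z.2 ^ 2|),
    Real.log (Real.sqrt (|z.1 + z.2| / |z.1 - z.2|)))

open Real

theorem Prod.ext_of_add_eq_of_sub_eq {K : Type*} [Field K] [NeZero (2 : K)] {p q : K × K}
    (hadd : p.1 + p.2 = q.1 + q.2) (hsub : p.1 - p.2 = q.1 - q.2) : p = q :=
  Prod.ext (mul_left_cancel₀ two_ne_zero (by linear_combination hadd + hsub))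
    (mul_left_cancel₀ two_ne_zero (by linear_combination hadd - hsub))

theorem splitExp_fst_add_snd (z : ℝ × ℝ) :
    (splitExp z).1 + (splitExp z).2 = exp (z.1 + z.2) := by
  rw [splitExp, ← mul_add, cosh_add_sinh, exp_add]

theorem splitExp_fst_sub_snd (z : ℝ × ℝ) :
    (splitExp z).1 - (splitExp z).2 = exp (z.1 - z.2) := by
  rw [splitExp, ← mul_sub, cosh_sub_sinh, sub_eq_add_neg, exp_add]

theorem splitLog_eq {z : ℝ × ℝ} (hadd : z.1 + z.2 ≠ 0) (hsub : z.1 - z.2 ≠ 0) :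
    splitLog z = ((log (z.1 + z.2) + log (z.1 - z.2)) / 2,
      (log (z.1 + z.2) - log (z.1 - z.2)) / 2) := by
  have hN : z.1 ^ 2 - z.2 ^ 2 = (z.1 + z.2) * (z.1 - z.2) := by ring
  rw [splitLog, log_sqrt (abs_nonneg _), log_sqrt (by positivity), hN, abs_mul,
    log_mul (abs_ne_zero.2 hadd) (abs_ne_zero.2 hsub),
    log_div (abs_ne_zero.2 hadd) (abs_ne_zero.2 hsub), log_abs, log_abs]

theorem splitLog_splitExp_apply (z : ℝ × ℝ) : splitLog (splitExp z) = z := by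
  have hadd := splitExp_fst_add_snd z
  have hsub := splitExp_fst_sub_snd z
  rw [splitLog_eq (hadd ▸ exp_ne_zero _) (hsub ▸ exp_ne_zero _), hadd, hsub, log_exp, log_exp]
  ext <;> ring

theorem splitExp_splitLog_of_pos {z : ℝ × ℝ} (hadd : 0 < z.1 + z.2) (hsub : 0 < z.1 - z.2) :
    splitExp (splitLog z) = z := by
  apply Prod.ext_of_add_eq_of_sub_eq
  · rw [splitExp_fst_add_snd, splitLog_eq hadd.ne' hsub.ne']
    convert exp_log hadd using 2
    ring
  · rw [splitExp_fst_sub_snd, splitLog_eq hadd.ne' hsub.ne']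
    convert exp_log hsub using 2
    ring

theorem splitLog_splitExp :
    (∀ z : ℝ × ℝ, splitLog (splitExp z) = z) ∧
    (∀ z : ℝ × ℝ, z.1 ^ 2 - z.2 ^ 2 > 0 → z.1 > 0 → splitExp (splitLog z) = z) := by
  refine ⟨splitLog_splitExp_apply, fun z hN hu => splitExp_splitLog_of_pos ?_ ?_⟩ <;> nlinarith
end
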